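/- Let (x*, z*) be a feasible fractional LP solution with z*(i) > 0 for all s_i, and let the random set C'_ℓ ⊆ C_ℓ be formed by including each object s_i ∈ C_ℓ independently with probability z*(i). Define the random variable x'_ℓ(j) = 0 if no object of ∪_{ℓ'} C'_{ℓ'} contains tag j, and x'_ℓ(j) = (x*_ℓ(j)/2) · max{1/z*(i) : s_i ∈ C'_ℓ, j ∈ t_i} otherwise (taken as 0 if no s_i ∈ C'_ℓ has j ∈ t_i). Then for all ℓ and all j ∈ T, E[x'_ℓ(j)] ≤ η · x*_ℓ(j)/2, where η = max_{j∈T} |E(j)| and E(j) = {s_i : j ∈ t_i}. -/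

import Mathlib

open scoped BigOperators Classical

/-!
Bound the maximum defining `x'` by the sum of the same nonnegative terms: `x'` is at most
`x ℓ j / 2` times the sum, over the objects `i ∈ C ℓ` carrying tag `j`, of the inverse-probability
indicators `[i selected] / z i`. Each indicator has expectation exactly `1`, so by linearity the
expectation is at most `x ℓ j / 2` times the number of such objects, which is at most `η`.
-/

theorem Finset.sup'_le_sum_of_nonneg {ι M : Type*} [AddCommMonoid M] [LinearOrder M]
    [IsOrderedAddMonoid M] {s : Finset ι} (hs : s.Nonempty) {f : ι → M}
    (hf : ∀ i ∈ s, 0 ≤ f i) : s.sup' hs f ≤ ∑ i ∈ s, f i :=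
  Finset.sup'_le hs f fun _ hi => Finset.single_le_sum hf hi

section IndependentSelection

variable {ι : Type*} [Fintype ι]

theorem prod_bernoulli_nonneg {q : ι → ℝ} (hq0 : ∀ i, 0 ≤ q i) (hq1 : ∀ i, q i ≤ 1)
    (σ : ι → Bool) : 0 ≤ ∏ i, (if σ i then q i else 1 - q i) :=
  Finset.prod_nonneg fun i _ => by
    split_ifs
    · exact hq0 i
    · linarith [hq1 i]

variable [DecidableEq ι]

theorem sum_prod_bernoulli_mul_apply (q : ι → ℝ) (i : ι) (g : Bool → ℝ) :
    ∑ σ : ι → Bool, (∏ i', if σ i' then q i' else 1 - q i') * g (σ i)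
      = q i * g true + (1 - q i) * g false := by
  set c : ι → Bool → ℝ := fun i' b =>
    (if b then q i' else 1 - q i') * (if i' = i then g b else 1) with hc
  have hsplit : ∀ σ : ι → Bool,
      (∏ i', if σ i' then q i' else 1 - q i') * g (σ i) = ∏ i', c i' (σ i') := by
    intro σ
    rw [hc, Finset.prod_mul_distrib, Finset.prod_ite_eq' Finset.univ i]
    simp
  rw [Finset.sum_congr rfl fun σ _ => hsplit σ, ← Fintype.prod_sum,
    Finset.prod_eq_single i (fun i' _ hi' => by simp [hc, hi']) (by simp)]
  simp [hc]

theorem sum_prod_bernoulli_mul_ite_inv (q : ι → ℝ) {i : ι} (hqi : q i ≠ 0) :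
    ∑ σ : ι → Bool, (∏ i', if σ i' then q i' else 1 - q i') * (if σ i then 1 / q i else 0)
      = 1 := by
  rw [sum_prod_bernoulli_mul_apply q i fun b => if b then 1 / q i else 0]
  simp [hqi]

end IndependentSelection

theorem stmt8 {S T : Type*} [Fintype S] [DecidableEq S] [DecidableEq T]
    {k : ℕ} (C : Fin k → Finset S) (t : S → Finset T)
    (x : Fin k → T → ℝ) (z : S → ℝ)
    (hx0 : ∀ ℓ j, 0 ≤ x ℓ j)
    (hz1 : ∀ i, z i ≤ 1) (hzpos : ∀ i, 0 < z i)
    (η : ℕ) (hη : ∀ j' : T, ((Finset.univ.filter fun i : S => j' ∈ t i).card ≤ η))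
    (probsel : (S → Bool) → ℝ)
    (hprobsel : ∀ σ, probsel σ = ∏ i, (if σ i then z i else 1 - z i))
    (x' : (S → Bool) → Fin k → T → ℝ)
    (hx' : ∀ σ ℓ j, x' σ ℓ j =
      if h : ((C ℓ).filter fun i => σ i = true ∧ j ∈ t i).Nonempty
      then x ℓ j / 2 *
        (((C ℓ).filter fun i => σ i = true ∧ j ∈ t i).sup' h fun i => 1 / z i)
      else 0)
    (ℓ : Fin k) (j : T) :
    ∑ σ : S → Bool, probsel σ * x' σ ℓ j ≤ (η : ℝ) * x ℓ j / 2 := by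
  set F := (C ℓ).filter fun i => j ∈ t i
  set ind : (S → Bool) → S → ℝ := fun σ i => if σ i then 1 / z i else 0
  have hind : ∀ σ i, 0 ≤ ind σ i := fun σ i => by
    simp only [ind]; split_ifs <;> simp [(hzpos i).le]
  have hc : 0 ≤ x ℓ j / 2 := by linarith [hx0 ℓ j]
  have hpointwise : ∀ σ, x' σ ℓ j ≤ x ℓ j / 2 * ∑ i ∈ F, ind σ i := by
    intro σ
    have hsum : ∑ i ∈ (C ℓ).filter (fun i => σ i = true ∧ j ∈ t i), 1 / z i
        = ∑ i ∈ F, ind σ i := by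
      rw [Finset.sum_filter, Finset.sum_filter]
      exact Finset.sum_congr rfl fun i _ => by by_cases σ i <;> by_cases j ∈ t i <;> simp [*, ind]
    rw [hx' σ ℓ j, ← hsum]
    split_ifs with h
    · exact mul_le_mul_of_nonneg_left
        (Finset.sup'_le_sum_of_nonneg h fun i _ => (one_div_pos.2 (hzpos i)).le) hc
    · simp [Finset.not_nonempty_iff_eq_empty.1 h]
  have hcard : (F.card : ℝ) ≤ η :=
    mod_cast (Finset.card_le_card fun i hi => by simp_all [F]).trans (hη j)
  calc ∑ σ, probsel σ * x' σ ℓ j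
      ≤ ∑ σ, probsel σ * (x ℓ j / 2 * ∑ i ∈ F, ind σ i) :=
        Finset.sum_le_sum fun σ _ => mul_le_mul_of_nonneg_left (hpointwise σ)
          (hprobsel σ ▸ prod_bernoulli_nonneg (fun i => (hzpos i).le) hz1 σ)
    _ = x ℓ j / 2 * ∑ i ∈ F, ∑ σ, probsel σ * ind σ i := by
        simp only [Finset.mul_sum, Finset.sum_comm (s := Finset.univ) (t := F)]
        exact Finset.sum_congr rfl fun i _ => Finset.sum_congr rfl fun σ _ => by ring
    _ = x ℓ j / 2 * F.card := by
        simp only [hprobsel, ind, sum_prod_bernoulli_mul_ite_inv z (hzpos _).ne',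
          Finset.sum_const, nsmul_one]
    _ ≤ η * x ℓ j / 2 := by nlinarith
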